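/- arXiv:2004.14160 — 2 statements merged into one kernel-verified Lean document; each statement's English description precedes it below -/
import Mathlib

section
/- Let F̃_{m,a}(n;x) = ∑_{k=0}^{n} C(n,k) * m^k * w_k(x/m) * (-a)^{n-k} with m ≠ 0. Then for all natural n, real m ≠ 0, a₁, a₂, x, with α = a₁ + a₂ + m: x * ∑_{k=0}^{n} C(n,k) * F̃_{m,a₁}(k;x) * F̃_{m,a₂}(n-k;x) = F̃_{m,α}(n+1;x) + α * F̃_{m,α}(n;x). -/
open Finset

def stirling2 : ℕ → ℕ → ℕ
  | 0, 0 => 1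
  | 0, _ + 1 => 0
  | _ + 1, 0 => 0
  | n + 1, k + 1 => (k + 1) * stirling2 n (k + 1) + stirling2 n k

lemma stirling2_eq_zero : ∀ k j, k < j → stirling2 k j = 0 := by
  intro k
  induction k with
  | zero => intro j h; cases j with | zero => omega | succ j => rfl
  | succ k ih =>
    intro j h
    cases j with
    | zero => omega
    | succ j => show (j+1) * stirling2 k (j+1) + stirling2 k j = 0
                rw [ih (j+1) (by omega), ih j (by omega)]; ring

lemma W : ∀ (k j : ℕ), ∑ i ∈ range (j+1), ((-1:ℝ))^j * (-1)^i * (j.choose i) * (i:ℝ)^k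
    = (j.factorial : ℝ) * (stirling2 k j) := by
  intro k
  induction k with
  | zero =>
    intro j
    have h := @Int.alternating_sum_range_choose j
    have h' : ∑ i ∈ range (j+1), ((-1:ℝ))^i * (j.choose i) = if j = 0 then 1 else 0 := by
      have := congrArg (fun z : ℤ => (z : ℝ)) h
      push_cast at this
      simpa using this
    calc ∑ i ∈ range (j+1), ((-1:ℝ))^j * (-1)^i * (j.choose i) * (i:ℝ)^0
        = (-1:ℝ)^j * ∑ i ∈ range (j+1), ((-1:ℝ))^i * (j.choose i) := by
          rw [mul_sum]; apply sum_congr rfl; intro i _; ring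
      _ = (j.factorial : ℝ) * (stirling2 0 j) := by
          rw [h']
          cases j with
          | zero => simp [stirling2]
          | succ j => simp [stirling2]
  | succ k ih =>
    intro j
    cases j with
    | zero => simp [stirling2]
    | succ j =>
      have key : ∀ t : ℕ, t ∈ range (j+1) → ((-1:ℝ))^(j+1) * (-1)^(t+1) * ((j+1).choose (t+1)) * ((t:ℝ)+1)^(k+1)
          = ((j:ℝ)+1) * (((-1:ℝ))^j * (-1)^t * (j.choose t) * ((t:ℝ)+1)^k) := by
        intro t _
        have hc : ((j+1).choose (t+1) * (t+1) : ℕ) = (j+1) * j.choose t := by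
          rw [← Nat.add_one_mul_choose_eq]
        have hc' : (((j+1).choose (t+1) : ℝ)) * ((t:ℝ)+1) = ((j:ℝ)+1) * (j.choose t : ℝ) := by
          exact_mod_cast congrArg (fun z : ℕ => (z : ℝ)) hc
        have : ((t:ℝ)+1)^(k+1) = ((t:ℝ)+1)^k * ((t:ℝ)+1) := by ring
        rw [this, pow_succ, pow_succ]
        linear_combination ((-1:ℝ))^j*(-1)^t*((t:ℝ)+1)^k * hc'
      have hA : (∑ i ∈ range (j+1+1), ((-1:ℝ))^(j+1) * (-1)^i * (((j+1).choose i):ℝ) * (i:ℝ)^k)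
          = (∑ t ∈ range (j+1), ((-1:ℝ))^j * (-1)^t * ((j.choose t):ℝ) * ((t:ℝ)+1)^k)
            + ((∑ t ∈ range (j+1), ((-1:ℝ))^j * (-1)^t * ((j.choose (t+1)):ℝ) * ((t:ℝ)+1)^k)
            + (-1:ℝ)^(j+1) * (0:ℝ)^k) := by
        rw [sum_range_succ']
        have hsp : ∀ t ∈ range (j+1), ((-1:ℝ))^(j+1) * (-1)^(t+1) * (((j+1).choose (t+1)):ℝ) * ((t+1:ℕ):ℝ)^k
            = ((-1:ℝ))^j * (-1)^t * ((j.choose t):ℝ) * ((t:ℝ)+1)^k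
              + ((-1:ℝ))^j * (-1)^t * ((j.choose (t+1)):ℝ) * ((t:ℝ)+1)^k := by
          intro t _
          rw [Nat.choose_succ_succ]
          push_cast
          ring
        rw [sum_congr rfl hsp, sum_add_distrib, add_assoc]
        congr 1
        simp
      have hB : (∑ i ∈ range (j+1), ((-1:ℝ))^j * (-1)^i * ((j.choose i):ℝ) * (i:ℝ)^k)
          = -(∑ t ∈ range j, ((-1:ℝ))^j * (-1)^t * ((j.choose (t+1)):ℝ) * ((t:ℝ)+1)^k)
            + (-1:ℝ)^j * (0:ℝ)^k := by
        rw [sum_range_succ']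
        have hsp : ∀ t ∈ range j, ((-1:ℝ))^j * (-1)^(t+1) * ((j.choose (t+1)):ℝ) * ((t+1:ℕ):ℝ)^k
            = -(((-1:ℝ))^j * (-1)^t * ((j.choose (t+1)):ℝ) * ((t:ℝ)+1)^k) := by
          intro t _
          push_cast
          ring
        rw [sum_congr rfl hsp, sum_neg_distrib]
        congr 1
        simp
      have hQ : (∑ t ∈ range (j+1), ((-1:ℝ))^j * (-1)^t * ((j.choose (t+1)):ℝ) * ((t:ℝ)+1)^k)
          = (∑ t ∈ range j, ((-1:ℝ))^j * (-1)^t * ((j.choose (t+1)):ℝ) * ((t:ℝ)+1)^k) := by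
        rw [sum_range_succ, Nat.choose_succ_self]
        simp
      have hP : (∑ t ∈ range (j+1), ((-1:ℝ))^j * (-1)^t * ((j.choose t):ℝ) * ((t:ℝ)+1)^k)
          = (∑ i ∈ range (j+1+1), ((-1:ℝ))^(j+1) * (-1)^i * (((j+1).choose i):ℝ) * (i:ℝ)^k)
            + (∑ i ∈ range (j+1), ((-1:ℝ))^j * (-1)^i * ((j.choose i):ℝ) * (i:ℝ)^k) := by
        linear_combination -hA - hB - hQ
      calc ∑ i ∈ range (j+1+1), ((-1:ℝ))^(j+1) * (-1)^i * (((j+1).choose i):ℝ) * (i:ℝ)^(k+1)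
          = ∑ t ∈ range (j+1), ((j:ℝ)+1) * (((-1:ℝ))^j * (-1)^t * ((j.choose t):ℝ) * ((t:ℝ)+1)^k) := by
            rw [sum_range_succ']
            have h0 : ((-1:ℝ))^(j+1) * (-1)^(0:ℕ) * (((j+1).choose 0):ℝ) * ((0:ℕ):ℝ)^(k+1) = 0 := by
              norm_num
            rw [h0, add_zero]
            apply sum_congr rfl
            intro t ht
            have hk := key t ht
            push_cast at hk ⊢
            linarith [hk]
        _ = ((j:ℝ)+1) * (∑ t ∈ range (j+1), ((-1:ℝ))^j * (-1)^t * ((j.choose t):ℝ) * ((t:ℝ)+1)^k) := by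
            rw [mul_sum]
        _ = ((j:ℝ)+1) * ((((j+1).factorial:ℝ) * (stirling2 k (j+1) : ℕ)) + ((j.factorial:ℝ) * (stirling2 k j : ℕ))) := by
            rw [hP, ih j]
            have := ih (j+1)
            rw [this]
        _ = (((j+1).factorial : ℝ)) * (stirling2 (k+1) (j+1) : ℕ) := by
            have hs : stirling2 (k+1) (j+1) = (j + 1) * stirling2 k (j + 1) + stirling2 k j := rfl
            rw [hs, Nat.factorial_succ]
            push_cast
            ring

lemma diff_vanish (j p : ℕ) (hp : p < j) (b cst : ℝ) :
    ∑ i ∈ range (j+1), ((-1:ℝ))^j * (-1)^i * (j.choose i : ℝ) * ((i:ℝ)*b + cst)^p = 0 := by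
  have hexp : ∀ i ∈ range (j+1), ((-1:ℝ))^j * (-1)^i * (j.choose i:ℝ) * ((i:ℝ)*b + cst)^p
      = ∑ r ∈ range (p+1), (b^r * cst^(p-r) * (p.choose r : ℝ)) * (((-1:ℝ))^j * (-1)^i * (j.choose i:ℝ) * (i:ℝ)^r) := by
    intro i _
    rw [add_pow, mul_sum]
    apply sum_congr rfl
    intro r _
    rw [mul_pow]
    ring
  rw [sum_congr rfl hexp, sum_comm]
  apply sum_eq_zero
  intro r hr
  have hrj : r < j := by have := mem_range.mp hr; omega
  rw [← mul_sum, W r j, stirling2_eq_zero r j hrj]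
  simp

noncomputable def w (n : ℕ) (x : ℝ) : ℝ :=
  ∑ k ∈ range (n + 1), (k.factorial : ℝ) * (stirling2 n k : ℝ) * x ^ k

noncomputable def Ft (m a : ℝ) (n : ℕ) (x : ℝ) : ℝ :=
  ∑ k ∈ range (n + 1), (n.choose k : ℝ) * m ^ k * w k (x / m) * (-a) ^ (n - k)

lemma Ft_eq (m a x : ℝ) (n : ℕ) :
    Ft m a n x = ∑ j ∈ range (n+1), (x/m)^j *
      ∑ i ∈ range (j+1), ((-1:ℝ))^j * (-1)^i * (j.choose i : ℝ) * ((i:ℝ)*m + -a)^n := by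
  have hw : ∀ k ∈ range (n+1), w k (x/m)
      = ∑ j ∈ range (n+1), (j.factorial:ℝ)*(stirling2 k j : ℕ) * (x/m)^j := by
    intro k hk
    have hk' : k + 1 ≤ n + 1 := by have := mem_range.mp hk; omega
    apply sum_subset (range_subset_range.mpr hk')
    intro j _ hj
    have hkj : k < j := by simp [mem_range] at hj; omega
    rw [stirling2_eq_zero k j hkj]
    simp
  calc Ft m a n x
      = ∑ k ∈ range (n+1), ∑ j ∈ range (n+1),
          (n.choose k:ℝ) * m^k * ((j.factorial:ℝ)*(stirling2 k j : ℕ)*(x/m)^j) * (-a)^(n-k) := by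
        unfold Ft
        apply sum_congr rfl
        intro k hk
        rw [hw k hk, mul_sum, sum_mul]
    _ = ∑ j ∈ range (n+1), ∑ k ∈ range (n+1),
          (n.choose k:ℝ) * m^k * ((j.factorial:ℝ)*(stirling2 k j : ℕ)*(x/m)^j) * (-a)^(n-k) := sum_comm
    _ = ∑ j ∈ range (n+1), (x/m)^j *
          ∑ i ∈ range (j+1), ((-1:ℝ))^j * (-1)^i * (j.choose i : ℝ) * ((i:ℝ)*m + -a)^n := by
        apply sum_congr rfl
        intro j _
        calc ∑ k ∈ range (n+1), (n.choose k:ℝ) * m^k * ((j.factorial:ℝ)*(stirling2 k j : ℕ)*(x/m)^j) * (-a)^(n-k)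
            = ∑ k ∈ range (n+1), ∑ i ∈ range (j+1),
                (x/m)^j * (((-1:ℝ))^j * (-1)^i * (j.choose i:ℝ)) * (((i:ℝ)*m)^k * (-a)^(n-k) * (n.choose k : ℝ)) := by
              apply sum_congr rfl
              intro k _
              rw [← W k j, sum_mul, mul_sum, sum_mul]
              apply sum_congr rfl
              intro i _
              ring
          _ = ∑ i ∈ range (j+1), (x/m)^j * (((-1:ℝ))^j * (-1)^i * (j.choose i:ℝ)) *
                ∑ k ∈ range (n+1), ((i:ℝ)*m)^k * (-a)^(n-k) * (n.choose k : ℝ) := by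
              rw [sum_comm]
              apply sum_congr rfl
              intro i _
              rw [mul_sum]
          _ = (x/m)^j * ∑ i ∈ range (j+1), ((-1:ℝ))^j * (-1)^i * (j.choose i : ℝ) * ((i:ℝ)*m + -a)^n := by
              rw [mul_sum]
              apply sum_congr rfl
              intro i _
              rw [← add_pow]
              ring

lemma Ft_pad (m a x : ℝ) (n N : ℕ) (hn : n ≤ N) :
    Ft m a n x = ∑ j ∈ range (N+1), (x/m)^j *
      ∑ i ∈ range (j+1), ((-1:ℝ))^j * (-1)^i * (j.choose i : ℝ) * ((i:ℝ)*m + -a)^n := by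
  rw [Ft_eq]
  apply sum_subset (range_subset_range.mpr (by omega))
  intro j _ hj
  have hnj : n < j := by simp [mem_range] at hj; omega
  rw [diff_vanish j n hnj m (-a), mul_zero]

lemma tri (h : ℕ → ℕ → ℝ) : ∀ n, ∑ j1 ∈ range (n+1), ∑ j2 ∈ range (n+1-j1), h j1 j2
    = ∑ j ∈ range (n+1), ∑ i ∈ range (j+1), h i (j - i) := by
  intro n
  induction n with
  | zero => simp
  | succ n ih =>
    calc ∑ j1 ∈ range (n+1+1), ∑ j2 ∈ range (n+1+1-j1), h j1 j2
        = (∑ j1 ∈ range (n+1), ∑ j2 ∈ range (n+1+1-j1), h j1 j2)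
            + ∑ j2 ∈ range (n+1+1-(n+1)), h (n+1) j2 := sum_range_succ _ _
      _ = (∑ j1 ∈ range (n+1), ((∑ j2 ∈ range (n+1-j1), h j1 j2) + h j1 (n+1-j1))) + h (n+1) 0 := by
          congr 1
          · apply sum_congr rfl
            intro j1 hj1
            have hs : n+1+1-j1 = (n+1-j1)+1 := by have := mem_range.mp hj1; omega
            rw [hs, sum_range_succ]
          · have hs : n+1+1-(n+1) = 1 := by omega
            rw [hs, sum_range_one]
      _ = ((∑ j1 ∈ range (n+1), ∑ j2 ∈ range (n+1-j1), h j1 j2)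
            + ∑ j1 ∈ range (n+1), h j1 (n+1-j1)) + h (n+1) 0 := by
          rw [sum_add_distrib]
      _ = (∑ j1 ∈ range (n+1), ∑ j2 ∈ range (n+1-j1), h j1 j2) + ∑ j1 ∈ range (n+1+1), h j1 (n+1-j1) := by
          rw [sum_range_succ (fun j1 => h j1 (n+1-j1)) (n+1), Nat.sub_self]
          ring
      _ = (∑ j ∈ range (n+1), ∑ i ∈ range (j+1), h i (j-i)) + ∑ j1 ∈ range (n+1+1), h j1 (n+1-j1) := by
          rw [ih]
      _ = ∑ j ∈ range (n+1+1), ∑ i ∈ range (j+1), h i (j-i) := (sum_range_succ _ _).symm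

lemma sq_diag (N : ℕ) (h : ℕ → ℕ → ℝ) (hv : ∀ j1 j2, j1 ≤ N → j2 ≤ N → N < j1 + j2 → h j1 j2 = 0) :
    ∑ j1 ∈ range (N+1), ∑ j2 ∈ range (N+1), h j1 j2
      = ∑ j ∈ range (N+1), ∑ i ∈ range (j+1), h i (j - i) := by
  rw [← tri]
  apply sum_congr rfl
  intro j1 hj1
  refine (sum_subset (range_subset_range.mpr (by omega)) ?_).symm
  intro j2 hj2 hj2'
  have h1 := mem_range.mp hj1
  have h2 := mem_range.mp hj2
  simp only [mem_range] at hj2'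
  exact hv j1 j2 (by omega) (by omega) (by omega)

lemma hockey (i1 : ℕ) : ∀ j, ∑ j1 ∈ range (j+1), (j1.choose i1) = (j+1).choose (i1+1) := by
  intro j
  induction j with
  | zero =>
    cases i1 with
    | zero => simp
    | succ i1 =>
      rw [sum_range_one]
      rw [Nat.choose_eq_zero_of_lt (show 0 < i1+1 by omega),
        Nat.choose_eq_zero_of_lt (show 0+1 < i1+1+1 by omega)]
  | succ j ih =>
    rw [sum_range_succ, ih, Nat.choose_succ_succ (j+1) i1]
    simp only [Nat.succ_eq_add_one]
    omega

lemma vand : ∀ (j : ℕ) (i1 i2 : ℕ),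
    ∑ j1 ∈ range (j+1), (j1.choose i1) * ((j - j1).choose i2) = (j+1).choose (i1+i2+1) := by
  intro j
  induction j with
  | zero =>
    intro i1 i2
    rw [sum_range_one]
    rcases i1 with _ | i1 <;> rcases i2 with _ | i2
    · simp
    · rw [Nat.choose_eq_zero_of_lt (show 0 < i2+1 by omega),
        Nat.choose_eq_zero_of_lt (show 0+1 < 0+(i2+1)+1 by omega)]
      ring
    · rw [Nat.choose_eq_zero_of_lt (show 0 < i1+1 by omega),
        Nat.choose_eq_zero_of_lt (show 0+1 < (i1+1)+0+1 by omega)]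
      ring
    · rw [Nat.choose_eq_zero_of_lt (show 0 < i1+1 by omega),
        Nat.choose_eq_zero_of_lt (show 0+1 < (i1+1)+(i2+1)+1 by omega)]
      ring
  | succ j ih =>
    intro i1 i2
    rw [sum_range_succ]
    cases i2 with
    | zero =>
      simp only [Nat.choose_zero_right, mul_one, Nat.sub_self]
      rw [hockey, Nat.choose_succ_succ (j+1) i1]
      simp only [Nat.succ_eq_add_one]
      omega
    | succ i2 =>
      have hsp : ∀ j1 ∈ range (j+1), (j1.choose i1) * ((j+1-j1).choose (i2+1))
          = (j1.choose i1) * ((j-j1).choose (i2+1)) + (j1.choose i1) * ((j-j1).choose i2) := by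
        intro j1 hj1
        have hs : j+1-j1 = (j-j1)+1 := by have := mem_range.mp hj1; omega
        rw [hs, Nat.choose_succ_succ]
        ring
      rw [sum_congr rfl hsp, sum_add_distrib, ih i1 (i2+1), ih i1 i2, Nat.sub_self]
      have e1 : i1+(i2+1)+1 = (i1+i2+1)+1 := by omega
      rw [e1, Nat.choose_succ_succ (j+1) (i1+i2+1)]
      rw [Nat.choose_eq_zero_of_lt (show 0 < i2+1 by omega)]
      simp only [Nat.succ_eq_add_one]
      omega

lemma L2 (s t u : Finset ℕ) (c : ℕ → ℝ) (f g : ℕ → ℕ → ℝ) :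
    ∑ k ∈ s, c k * ((∑ i ∈ t, f i k) * (∑ j ∈ u, g j k))
      = ∑ i ∈ t, ∑ j ∈ u, ∑ k ∈ s, c k * (f i k * g j k) := by
  calc ∑ k ∈ s, c k * ((∑ i ∈ t, f i k) * (∑ j ∈ u, g j k))
      = ∑ k ∈ s, ∑ i ∈ t, ∑ j ∈ u, c k * (f i k * g j k) := by
        apply sum_congr rfl
        intro k _
        rw [sum_mul_sum, mul_sum]
        apply sum_congr rfl
        intro i _
        rw [mul_sum]
    _ = ∑ i ∈ t, ∑ k ∈ s, ∑ j ∈ u, c k * (f i k * g j k) := sum_comm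
    _ = ∑ i ∈ t, ∑ j ∈ u, ∑ k ∈ s, c k * (f i k * g j k) := by
        apply sum_congr rfl
        intro i _
        exact sum_comm

noncomputable def gn (m α : ℝ) (n : ℕ) (s : ℕ) : ℝ := ((s:ℝ)*m + (m - α))^n

noncomputable def cc (m α : ℝ) (n : ℕ) (j1 j2 : ℕ) : ℝ :=
  ∑ i1 ∈ range (j1+1), ∑ i2 ∈ range (j2+1),
    ((-1:ℝ))^j1 * (-1)^i1 * (j1.choose i1:ℝ) *
      (((-1:ℝ))^j2 * (-1)^i2 * (j2.choose i2:ℝ)) * gn m α n (i1+i2)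

lemma cvanish (m α : ℝ) (n j1 j2 : ℕ) (h : n < j1 + j2) : cc m α n j1 j2 = 0 := by
  have key : ∀ i1 i2 : ℕ, gn m α n (i1+i2)
      = ∑ r ∈ range (n+1), (n.choose r:ℝ) *
          ((((i1:ℝ)*m + 0)^r) * (((i2:ℝ)*m + (m-α))^(n-r))) := by
    intro i1 i2
    unfold gn
    have hb : (((i1+i2:ℕ)):ℝ)*m + (m-α) = ((i1:ℝ)*m + 0) + ((i2:ℝ)*m + (m-α)) := by
      push_cast; ring
    rw [hb, add_pow]
    apply sum_congr rfl
    intro r _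
    ring
  calc cc m α n j1 j2
      = ∑ r ∈ range (n+1), (n.choose r:ℝ) *
          ((∑ i1 ∈ range (j1+1), ((-1:ℝ))^j1 * (-1)^i1 * (j1.choose i1:ℝ) * ((i1:ℝ)*m + 0)^r) *
           (∑ i2 ∈ range (j2+1), ((-1:ℝ))^j2 * (-1)^i2 * (j2.choose i2:ℝ) * ((i2:ℝ)*m + (m-α))^(n-r))) := by
        rw [L2]
        unfold cc
        apply sum_congr rfl
        intro i1 _
        apply sum_congr rfl
        intro i2 _
        rw [key i1 i2, mul_sum]
        apply sum_congr rfl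
        intro r _
        ring
    _ = 0 := by
        apply sum_eq_zero
        intro r hr
        by_cases hrj : r < j1
        · rw [diff_vanish j1 r hrj m 0]
          simp
        · have h2 : n - r < j2 := by have := mem_range.mp hr; omega
          rw [diff_vanish j2 (n-r) h2 m (m-α)]
          simp

lemma inner_k (m a₁ a₂ : ℝ) (n j1 j2 : ℕ) :
    ∑ k ∈ range (n+1), (n.choose k:ℝ) *
      ((∑ i ∈ range (j1+1), ((-1:ℝ))^j1 * (-1)^i * (j1.choose i:ℝ) * ((i:ℝ)*m + -a₁)^k) *
       (∑ i ∈ range (j2+1), ((-1:ℝ))^j2 * (-1)^i * (j2.choose i:ℝ) * ((i:ℝ)*m + -a₂)^(n-k)))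
    = cc m (a₁+a₂+m) n j1 j2 := by
  rw [L2]
  unfold cc
  apply sum_congr rfl
  intro i1 _
  apply sum_congr rfl
  intro i2 _
  calc ∑ k ∈ range (n+1), (n.choose k:ℝ) *
        ((((-1:ℝ))^j1 * (-1)^i1 * (j1.choose i1:ℝ) * ((i1:ℝ)*m + -a₁)^k) *
         (((-1:ℝ))^j2 * (-1)^i2 * (j2.choose i2:ℝ) * ((i2:ℝ)*m + -a₂)^(n-k)))
      = (((-1:ℝ))^j1 * (-1)^i1 * (j1.choose i1:ℝ) * (((-1:ℝ))^j2 * (-1)^i2 * (j2.choose i2:ℝ))) *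
          ∑ k ∈ range (n+1), ((i1:ℝ)*m + -a₁)^k * ((i2:ℝ)*m + -a₂)^(n-k) * (n.choose k:ℝ) := by
        rw [mul_sum]
        apply sum_congr rfl
        intro k _
        ring
    _ = ((-1:ℝ))^j1 * (-1)^i1 * (j1.choose i1:ℝ) *
          (((-1:ℝ))^j2 * (-1)^i2 * (j2.choose i2:ℝ)) * gn m (a₁+a₂+m) n (i1+i2) := by
        rw [← add_pow]
        unfold gn
        have hb : ((i1:ℝ)*m + -a₁) + ((i2:ℝ)*m + -a₂) = (((i1+i2:ℕ)):ℝ)*m + (m - (a₁+a₂+m)) := by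
          push_cast; ring
        rw [hb]

lemma perj (m α : ℝ) (n j : ℕ) :
    ∑ i ∈ range (j+1), cc m α n i (j - i)
      = ∑ s ∈ range (j+1), ((s:ℝ)+1) *
          (((-1:ℝ))^j * (-1)^s * (((j+1).choose (s+1)):ℝ) * gn m α n s) := by
  have ext : ∀ j1 ∈ range (j+1), cc m α n j1 (j-j1)
      = ∑ i1 ∈ range (j+1), ∑ i2 ∈ range (j+1),
          ((-1:ℝ))^j1 * (-1)^i1 * (j1.choose i1:ℝ) *
            (((-1:ℝ))^(j-j1) * (-1)^i2 * (((j-j1).choose i2):ℝ)) * gn m α n (i1+i2) := by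
    intro j1 hj1
    have hj1' := mem_range.mp hj1
    unfold cc
    calc ∑ i1 ∈ range (j1+1), ∑ i2 ∈ range ((j-j1)+1),
            ((-1:ℝ))^j1 * (-1)^i1 * (j1.choose i1:ℝ) *
              (((-1:ℝ))^(j-j1) * (-1)^i2 * (((j-j1).choose i2):ℝ)) * gn m α n (i1+i2)
        = ∑ i1 ∈ range (j1+1), ∑ i2 ∈ range (j+1),
            ((-1:ℝ))^j1 * (-1)^i1 * (j1.choose i1:ℝ) *
              (((-1:ℝ))^(j-j1) * (-1)^i2 * (((j-j1).choose i2):ℝ)) * gn m α n (i1+i2) := by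
          apply sum_congr rfl
          intro i1 _
          apply sum_subset (range_subset_range.mpr (by omega))
          intro i2 _ hi2
          have hlt : j - j1 < i2 := by simp [mem_range] at hi2; omega
          rw [Nat.choose_eq_zero_of_lt hlt]
          push_cast
          ring
      _ = ∑ i1 ∈ range (j+1), ∑ i2 ∈ range (j+1),
            ((-1:ℝ))^j1 * (-1)^i1 * (j1.choose i1:ℝ) *
              (((-1:ℝ))^(j-j1) * (-1)^i2 * (((j-j1).choose i2):ℝ)) * gn m α n (i1+i2) := by
          apply sum_subset (range_subset_range.mpr (by omega))
          intro i1 _ hi1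
          have hlt : j1 < i1 := by simp [mem_range] at hi1; omega
          apply sum_eq_zero
          intro i2 _
          rw [Nat.choose_eq_zero_of_lt hlt]
          push_cast
          ring
  calc ∑ j1 ∈ range (j+1), cc m α n j1 (j - j1)
      = ∑ j1 ∈ range (j+1), ∑ i1 ∈ range (j+1), ∑ i2 ∈ range (j+1),
          ((-1:ℝ))^j1 * (-1)^i1 * (j1.choose i1:ℝ) *
            (((-1:ℝ))^(j-j1) * (-1)^i2 * (((j-j1).choose i2):ℝ)) * gn m α n (i1+i2) :=
        sum_congr rfl ext
    _ = ∑ i1 ∈ range (j+1), ∑ i2 ∈ range (j+1), ∑ j1 ∈ range (j+1),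
          ((-1:ℝ))^j1 * (-1)^i1 * (j1.choose i1:ℝ) *
            (((-1:ℝ))^(j-j1) * (-1)^i2 * (((j-j1).choose i2):ℝ)) * gn m α n (i1+i2) := by
        rw [sum_comm]
        apply sum_congr rfl
        intro i1 _
        rw [sum_comm]
    _ = ∑ i1 ∈ range (j+1), ∑ i2 ∈ range (j+1),
          ((-1:ℝ))^j * (-1)^i1 * (-1)^i2 * (((j+1).choose (i1+i2+1)):ℝ) * gn m α n (i1+i2) := by
        apply sum_congr rfl
        intro i1 _
        apply sum_congr rfl
        intro i2 _
        calc ∑ j1 ∈ range (j+1),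
              ((-1:ℝ))^j1 * (-1)^i1 * (j1.choose i1:ℝ) *
                (((-1:ℝ))^(j-j1) * (-1)^i2 * (((j-j1).choose i2):ℝ)) * gn m α n (i1+i2)
            = ∑ j1 ∈ range (j+1),
                ((-1:ℝ))^j * (-1)^i1 * (-1)^i2 * gn m α n (i1+i2) *
                  (((j1.choose i1) * ((j-j1).choose i2) : ℕ) : ℝ) := by
              apply sum_congr rfl
              intro j1 hj1
              have hj1' := mem_range.mp hj1
              have hsign : ((-1:ℝ))^j1 * (-1)^(j-j1) = (-1)^j := by
                rw [← pow_add]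
                congr 1
                omega
              push_cast
              linear_combination ((-1:ℝ))^i1 * (-1)^i2 * (j1.choose i1:ℝ) * (((j-j1).choose i2):ℝ) * gn m α n (i1+i2) * hsign
          _ = ((-1:ℝ))^j * (-1)^i1 * (-1)^i2 * (((j+1).choose (i1+i2+1)):ℝ) * gn m α n (i1+i2) := by
              rw [← mul_sum, ← Nat.cast_sum, vand j i1 i2]
              ring
    _ = ∑ s ∈ range (j+1), ∑ i ∈ range (s+1),
          ((-1:ℝ))^j * (-1)^i * (-1)^(s-i) * (((j+1).choose (i+(s-i)+1)):ℝ) * gn m α n (i+(s-i)) := by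
        apply sq_diag
        intro i1 i2 _ _ hgt
        rw [Nat.choose_eq_zero_of_lt (show j+1 < i1+i2+1 by omega)]
        push_cast
        ring
    _ = ∑ s ∈ range (j+1), ((s:ℝ)+1) *
          (((-1:ℝ))^j * (-1)^s * (((j+1).choose (s+1)):ℝ) * gn m α n s) := by
        apply sum_congr rfl
        intro s hs
        have heq : ∀ i ∈ range (s+1),
            ((-1:ℝ))^j * (-1)^i * (-1)^(s-i) * (((j+1).choose (i+(s-i)+1)):ℝ) * gn m α n (i+(s-i))
              = ((-1:ℝ))^j * (-1)^s * (((j+1).choose (s+1)):ℝ) * gn m α n s := by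
          intro i hi
          have hi' := mem_range.mp hi
          have hadd : i + (s-i) = s := by omega
          have hsign : ((-1:ℝ))^i * (-1)^(s-i) = (-1)^s := by
            rw [← pow_add]
            congr 1
          rw [hadd]
          linear_combination ((-1:ℝ))^j * (((j+1).choose (s+1)):ℝ) * gn m α n s * hsign
        rw [sum_congr rfl heq, sum_const, card_range, nsmul_eq_mul]
        push_cast
        ring

lemma rhs_eq (m α x : ℝ) (n : ℕ) :
    Ft m α (n+1) x + α * Ft m α n x
      = ∑ j ∈ range (n+1), (x/m)^(j+1) * (m * (∑ s ∈ range (j+1), ((s:ℝ)+1) *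
          (((-1:ℝ))^j * (-1)^s * (((j+1).choose (s+1)):ℝ) * gn m α n s))) := by
  have hT : ∀ j : ℕ, (∑ i ∈ range (j+1), ((-1:ℝ))^j * (-1)^i * (j.choose i : ℝ) * ((i:ℝ)*m + -α)^(n+1))
      + α * (∑ i ∈ range (j+1), ((-1:ℝ))^j * (-1)^i * (j.choose i : ℝ) * ((i:ℝ)*m + -α)^n)
      = m * ∑ i ∈ range (j+1), ((-1:ℝ))^j * (-1)^i * (j.choose i : ℝ) * (i:ℝ) * ((i:ℝ)*m + -α)^n := by
    intro j
    rw [mul_sum, mul_sum, ← sum_add_distrib]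
    apply sum_congr rfl
    intro i _
    ring
  have hD : ∀ j : ℕ, (∑ i ∈ range (j+1+1), ((-1:ℝ))^(j+1) * (-1)^i * ((j+1).choose i : ℝ) * (i:ℝ) * ((i:ℝ)*m + -α)^n)
      = ∑ s ∈ range (j+1), ((s:ℝ)+1) *
          (((-1:ℝ))^j * (-1)^s * (((j+1).choose (s+1)):ℝ) * gn m α n s) := by
    intro j
    rw [sum_range_succ']
    have h0 : ((-1:ℝ))^(j+1) * (-1)^(0:ℕ) * ((j+1).choose 0 : ℝ) * ((0:ℕ):ℝ) * (((0:ℕ):ℝ)*m + -α)^n = 0 := by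
      simp
    rw [h0, add_zero]
    apply sum_congr rfl
    intro s _
    have hbase : (((s+1:ℕ)):ℝ)*m + -α = (s:ℝ)*m + (m - α) := by push_cast; ring
    unfold gn
    rw [hbase]
    push_cast
    ring
  calc Ft m α (n+1) x + α * Ft m α n x
      = (∑ j ∈ range (n+1+1), (x/m)^j *
          ∑ i ∈ range (j+1), ((-1:ℝ))^j * (-1)^i * (j.choose i : ℝ) * ((i:ℝ)*m + -α)^(n+1))
        + α * ∑ j ∈ range (n+1+1), (x/m)^j *
          ∑ i ∈ range (j+1), ((-1:ℝ))^j * (-1)^i * (j.choose i : ℝ) * ((i:ℝ)*m + -α)^n := by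
        rw [Ft_eq m α x (n+1), Ft_pad m α x n (n+1) (by omega)]
    _ = ∑ j ∈ range (n+1+1), (x/m)^j *
          (m * ∑ i ∈ range (j+1), ((-1:ℝ))^j * (-1)^i * (j.choose i : ℝ) * (i:ℝ) * ((i:ℝ)*m + -α)^n) := by
        rw [mul_sum, ← sum_add_distrib]
        apply sum_congr rfl
        intro j _
        linear_combination (x/m)^j * hT j
    _ = ∑ j ∈ range (n+1), (x/m)^(j+1) *
          (m * ∑ i ∈ range (j+1+1), ((-1:ℝ))^(j+1) * (-1)^i * ((j+1).choose i : ℝ) * (i:ℝ) * ((i:ℝ)*m + -α)^n) := by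
        rw [sum_range_succ']
        have h0 : (x/m)^(0:ℕ) * (m * ∑ i ∈ range (0+1), ((-1:ℝ))^(0:ℕ) * (-1)^i * ((0:ℕ).choose i : ℝ) * (i:ℝ) * ((i:ℝ)*m + -α)^n) = 0 := by
          simp
        rw [h0, add_zero]
    _ = ∑ j ∈ range (n+1), (x/m)^(j+1) * (m * (∑ s ∈ range (j+1), ((s:ℝ)+1) *
          (((-1:ℝ))^j * (-1)^s * (((j+1).choose (s+1)):ℝ) * gn m α n s))) := by
        apply sum_congr rfl
        intro j _
        rw [hD j]

theorem stmt9 (n : ℕ) (m a₁ a₂ x : ℝ) (hm : m ≠ 0) :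
    x * ∑ k ∈ range (n + 1), (n.choose k : ℝ) * Ft m a₁ k x * Ft m a₂ (n - k) x
      = Ft m (a₁ + a₂ + m) (n + 1) x + (a₁ + a₂ + m) * Ft m (a₁ + a₂ + m) n x := by
  have hS : (∑ k ∈ range (n+1), (n.choose k:ℝ) * Ft m a₁ k x * Ft m a₂ (n-k) x)
      = ∑ j1 ∈ range (n+1), ∑ j2 ∈ range (n+1),
          ((x/m)^j1 * (x/m)^j2) * cc m (a₁+a₂+m) n j1 j2 := by
    calc ∑ k ∈ range (n+1), (n.choose k:ℝ) * Ft m a₁ k x * Ft m a₂ (n-k) x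
        = ∑ k ∈ range (n+1), (n.choose k:ℝ) *
            ((∑ j1 ∈ range (n+1), (x/m)^j1 *
              ∑ i ∈ range (j1+1), ((-1:ℝ))^j1 * (-1)^i * (j1.choose i:ℝ) * ((i:ℝ)*m + -a₁)^k) *
             (∑ j2 ∈ range (n+1), (x/m)^j2 *
              ∑ i ∈ range (j2+1), ((-1:ℝ))^j2 * (-1)^i * (j2.choose i:ℝ) * ((i:ℝ)*m + -a₂)^(n-k))) := by
          apply sum_congr rfl
          intro k hk
          rw [Ft_pad m a₁ x k n (by have := mem_range.mp hk; omega),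
            Ft_pad m a₂ x (n-k) n (by omega), mul_assoc]
      _ = ∑ j1 ∈ range (n+1), ∑ j2 ∈ range (n+1), ∑ k ∈ range (n+1),
            (n.choose k:ℝ) *
              (((x/m)^j1 *
                ∑ i ∈ range (j1+1), ((-1:ℝ))^j1 * (-1)^i * (j1.choose i:ℝ) * ((i:ℝ)*m + -a₁)^k) *
               ((x/m)^j2 *
                ∑ i ∈ range (j2+1), ((-1:ℝ))^j2 * (-1)^i * (j2.choose i:ℝ) * ((i:ℝ)*m + -a₂)^(n-k))) :=
          L2 _ _ _ _ _ _
      _ = ∑ j1 ∈ range (n+1), ∑ j2 ∈ range (n+1),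
            ((x/m)^j1 * (x/m)^j2) * cc m (a₁+a₂+m) n j1 j2 := by
          apply sum_congr rfl
          intro j1 _
          apply sum_congr rfl
          intro j2 _
          rw [← inner_k m a₁ a₂ n j1 j2, mul_sum]
          apply sum_congr rfl
          intro k _
          ring
  have hdiag : (∑ j1 ∈ range (n+1), ∑ j2 ∈ range (n+1),
        ((x/m)^j1 * (x/m)^j2) * cc m (a₁+a₂+m) n j1 j2)
      = ∑ j ∈ range (n+1), ∑ i ∈ range (j+1),
          ((x/m)^i * (x/m)^(j-i)) * cc m (a₁+a₂+m) n i (j-i) :=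
    sq_diag n (fun j1 j2 => ((x/m)^j1 * (x/m)^j2) * cc m (a₁+a₂+m) n j1 j2)
      (by intro j1 j2 _ _ hgt
          show (x/m)^j1 * (x/m)^j2 * cc m (a₁+a₂+m) n j1 j2 = 0
          rw [cvanish m (a₁+a₂+m) n j1 j2 hgt]
          ring)
  rw [hS, hdiag, rhs_eq m (a₁+a₂+m) x n, mul_sum]
  apply sum_congr rfl
  intro j _
  have hstep1 : (∑ i ∈ range (j+1), ((x/m)^i * (x/m)^(j-i)) * cc m (a₁+a₂+m) n i (j-i))
      = (x/m)^j * ∑ i ∈ range (j+1), cc m (a₁+a₂+m) n i (j-i) := by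
    rw [mul_sum]
    apply sum_congr rfl
    intro i hi
    have hi' := mem_range.mp hi
    have : (x/m)^i * (x/m)^(j-i) = (x/m)^j := by
      rw [← pow_add]
      congr 1
      omega
    rw [this]
  rw [hstep1, perj m (a₁+a₂+m) n j]
  have hym : (x/m) * m = x := div_mul_cancel₀ x hm
  rw [pow_succ]
  linear_combination (-(((x/m))^j * (∑ s ∈ range (j+1), ((s:ℝ)+1) *
    (((-1:ℝ))^j * (-1)^s * (((j+1).choose (s+1)):ℝ) * gn m (a₁+a₂+m) n s)))) * hym
end

section
/- For every natural number n and every real x with 0 ≤ x: the series ∑_{k=0}^{∞} (x/(x+1))^k * k^n converges and w_n(x) = (1/(x+1)) * ∑_{k=0}^{∞} (x/(x+1))^k * k^n, where w_n(x) = ∑_{k=0}^{n} k! * S(n,k) * x^k. -/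
open Finset

/-!
Expanding `k ^ n = ∑ⱼ S(n, j) · k(k-1)⋯(k-j+1) = ∑ⱼ j! S(n, j) C(k, j)` reduces the series to the
binomial series `∑ₖ C(k, j) rᵏ = rʲ / (1 - r)ʲ⁺¹`. For `r = x / (x + 1)` one has `r / (1 - r) = x`
and `1 / (1 - r) = x + 1`, which gives the geometric polynomial.
-/

theorem stirling2_eq_stirlingSecond : stirling2 = Nat.stirlingSecond := by
  funext n k
  induction n generalizing k with
  | zero => cases k <;> rfl
  | succ n ih => cases k <;> simp [stirling2, Nat.stirlingSecond_succ_succ, ih]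

namespace Nat

theorem self_mul_descFactorial (k j : ℕ) :
    k * k.descFactorial j = j * k.descFactorial j + k.descFactorial (j + 1) := by
  rw [descFactorial_succ]
  rcases le_or_gt j k with h | h
  · rw [← add_mul, Nat.add_sub_cancel' h]
  · simp [descFactorial_eq_zero_iff_lt.mpr h]

theorem pow_eq_sum_stirlingSecond_mul_descFactorial (n k : ℕ) :
    k ^ n = ∑ j ∈ range (n + 1), stirlingSecond n j * k.descFactorial j := by
  induction n with
  | zero => simp
  | succ n ih =>
    have reindex : ∑ j ∈ range (n + 1), stirlingSecond n j * (j * k.descFactorial j) =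
        ∑ j ∈ range (n + 1), (j + 1) * stirlingSecond n (j + 1) * k.descFactorial (j + 1) := by
      rw [sum_range_succ', sum_range_succ, stirlingSecond_eq_zero_of_lt (lt_add_one n)]
      simp only [mul_zero, zero_mul, add_zero, mul_left_comm, mul_assoc]
    calc k ^ (n + 1)
        = ∑ j ∈ range (n + 1), (stirlingSecond n j * (j * k.descFactorial j)
            + stirlingSecond n j * k.descFactorial (j + 1)) := by
          rw [pow_succ, ih, sum_mul]
          simp_rw [mul_assoc, mul_comm _ k, self_mul_descFactorial, mul_add]
      _ = ∑ j ∈ range (n + 1), stirlingSecond (n + 1) (j + 1) * k.descFactorial (j + 1) := by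
          rw [sum_add_distrib, reindex, ← sum_add_distrib]
          simp only [stirlingSecond_succ_succ, add_mul]
      _ = ∑ j ∈ range (n + 1 + 1), stirlingSecond (n + 1) j * k.descFactorial j := by
          rw [sum_range_succ' _ (n + 1), stirlingSecond_succ_zero, zero_mul, add_zero]

end Nat

section MulGeometric

variable {𝕜 : Type*} [NormedField 𝕜] {r : 𝕜}

theorem hasSum_choose_mul_geometric (j : ℕ) (hr : ‖r‖ < 1) :
    HasSum (fun k : ℕ => (k.choose j : 𝕜) * r ^ k) ((1 - r)⁻¹ * (r / (1 - r)) ^ j) := by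
  have hr1 : 1 - r ≠ 0 := sub_ne_zero.mpr (by rintro rfl; simp at hr)
  have value : 1 / (1 - r) ^ (j + 1) * r ^ j = (1 - r)⁻¹ * (r / (1 - r)) ^ j := by
    rw [div_pow]
    field_simp
    ring
  have shifted : HasSum (fun k : ℕ => ((k + j).choose j : 𝕜) * r ^ (k + j))
      ((1 - r)⁻¹ * (r / (1 - r)) ^ j) := by
    rw [← value]
    simpa only [pow_add, mul_assoc] using
      (hasSum_choose_mul_geometric_of_norm_lt_one j hr).mul_right (r ^ j)
  have initial_terms : ∑ k ∈ range j, (k.choose j : 𝕜) * r ^ k = 0 :=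
    sum_eq_zero fun k hk => by
      rw [Nat.choose_eq_zero_of_lt (mem_range.mp hk), Nat.cast_zero, zero_mul]
  simpa only [initial_terms, add_zero] using
    (hasSum_nat_add_iff (f := fun k : ℕ => (k.choose j : 𝕜) * r ^ k) j).mp shifted

theorem hasSum_geometric_mul_pow (n : ℕ) (hr : ‖r‖ < 1) :
    HasSum (fun k : ℕ => r ^ k * (k : 𝕜) ^ n)
      ((1 - r)⁻¹ * ∑ j ∈ range (n + 1),
        (j.factorial : 𝕜) * (Nat.stirlingSecond n j : 𝕜) * (r / (1 - r)) ^ j) := by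
  have expand : (fun k : ℕ => r ^ k * (k : 𝕜) ^ n) = fun k => ∑ j ∈ range (n + 1),
      (j.factorial : 𝕜) * (Nat.stirlingSecond n j : 𝕜) * ((k.choose j : 𝕜) * r ^ k) := by
    funext k
    rw [← Nat.cast_pow, Nat.pow_eq_sum_stirlingSecond_mul_descFactorial]
    push_cast [Nat.descFactorial_eq_factorial_mul_choose]
    rw [mul_sum]
    exact sum_congr rfl fun j _ => by ring
  rw [expand, mul_sum]
  exact hasSum_sum fun j _ => by
    rw [mul_left_comm]
    exact (hasSum_choose_mul_geometric j hr).mul_left _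

end MulGeometric

theorem stmt17 (n : ℕ) (x : ℝ) (hx : 0 ≤ x) :
    Summable (fun k : ℕ => (x / (x + 1)) ^ k * (k : ℝ) ^ n) ∧
      w n x = (1 / (x + 1)) * ∑' k : ℕ, (x / (x + 1)) ^ k * (k : ℝ) ^ n := by
  have hx1 : 0 < x + 1 := by linarith
  have hr : ‖x / (x + 1)‖ < 1 := by
    rw [Real.norm_of_nonneg (by positivity), div_lt_one hx1]
    linarith
  have h1r : 1 - x / (x + 1) = (x + 1)⁻¹ := by field_simp; ring
  have hsum := hasSum_geometric_mul_pow n hr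
  rw [h1r, inv_inv, div_inv_eq_mul, div_mul_cancel₀ x hx1.ne', ← stirling2_eq_stirlingSecond,
    ← w] at hsum
  refine ⟨hsum.summable, ?_⟩
  rw [hsum.tsum_eq]
  field_simp
end
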